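/- Under the MMSB setup, with V_2 = V V' and V_{*,2} its row-normalized version, there exists Y_2 ∈ ℝ^{n×K} with all entries nonnegative and no row identically zero such that V_{*,2} = Y_2 · V_{*,2}(𝓘,:); explicitly, Y_2 = N_{M_2} Π 𝒟_τ^{1/2}(𝓘,𝓘) N_{V_2}^{-1}(𝓘,𝓘), where M_2 = Π 𝒟_τ^{1/2}(𝓘,𝓘) V_2(𝓘,:) and N_{M_2} is the n×n diagonal matrix with N_{M_2}(i,i) = 1/‖M_2(i,:)‖ (all diagonal entries positive). Moreover, Π(i,:) = Π(j,:) implies V_{*,2}(i,:) = V_{*,2}(j,:). -/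

import Mathlib

/-
Write `D = diag(√(𝒟_τ(i,i)))`. From `𝓛_τ V = V E` with `E` invertible, `V V' = 𝓛_τ (V E⁻¹ V')`,
and `𝓛_τ = D⁻¹ Π (ρP̃) Π' D⁻¹` starts with `D⁻¹ Π`; so `V₂ = D⁻¹ Π C` for some `C`. Reading this
off at the pure rows `𝓘`, where `Π(𝓘,:) = I`, gives `C = D(𝓘,𝓘) V₂(𝓘,:)`, i.e. `V₂ = D⁻¹ M₂`.
Row normalization ignores the positive row scaling `D⁻¹`, so `V_{*,2} = N_{M₂} M₂`, and writing
`V₂(𝓘,:) = N_{V₂}⁻¹(𝓘,𝓘) V_{*,2}(𝓘,:)` inside `M₂` gives the factorization. Since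
`M₂ = Π (D(𝓘,𝓘) V₂(𝓘,:))`, rows of `V_{*,2}` depend only on the corresponding rows of `Π`.
-/

open Matrix BigOperators

/-- Euclidean norm of the `i`-th row of a matrix. -/
noncomputable def rowNorm {m k : ℕ} (M : Matrix (Fin m) (Fin k) ℝ) (i : Fin m) : ℝ :=
  Real.sqrt (∑ j, (M i j) ^ 2)

section LinearAlgebra

variable {R : Type*} [Field R] {m k l : Type*} [Fintype m] [Fintype k] [DecidableEq k]

theorem diagonal_mul_diagonal_inv {d : k → R} (hd : ∀ a, d a ≠ 0) :
    diagonal d * diagonal (fun a => (d a)⁻¹) = 1 := by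
  rw [diagonal_mul_diagonal, ← diagonal_one]
  exact congrArg diagonal (funext fun a => mul_inv_cancel₀ (hd a))

theorem mul_transpose_eq_mul_of_eq_mul_diagonal_mul_transpose {L : Matrix m m R}
    {V : Matrix m k R} {e : k → R} (hV : Vᵀ * V = 1) (he : ∀ a, e a ≠ 0)
    (hL : L = V * diagonal e * Vᵀ) :
    V * Vᵀ = L * (V * diagonal (fun a => (e a)⁻¹) * Vᵀ) := by
  rw [hL]
  simp only [Matrix.mul_assoc]
  rw [← Matrix.mul_assoc Vᵀ V, hV, Matrix.one_mul, ← Matrix.mul_assoc (diagonal e),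
    diagonal_mul_diagonal_inv he, Matrix.one_mul]

theorem submatrix_diagonal_mul [DecidableEq m] (d : m → R) (A : Matrix m l R) (r : k → m) :
    (diagonal d * A).submatrix r id = diagonal (fun a => d (r a)) * A.submatrix r id := by
  ext a j
  simp [diagonal_mul]

theorem eq_diagonal_inv_mul_mul_submatrix [DecidableEq m] {Pi : Matrix m k R} {r : k → m}
    (hr : Pi.submatrix r id = 1) {d : m → R} (hd : ∀ i, d i ≠ 0) {C : Matrix k l R}
    {W : Matrix m l R} (hW : W = diagonal (fun i => (d i)⁻¹) * Pi * C) :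
    W = diagonal (fun i => (d i)⁻¹) * (Pi * diagonal (fun a => d (r a)) * W.submatrix r id) := by
  have hC : W.submatrix r id = diagonal (fun a => (d (r a))⁻¹) * C := by
    rw [hW, Matrix.mul_assoc, submatrix_diagonal_mul,
      submatrix_mul Pi C r id id Function.bijective_id, hr, submatrix_id_id, Matrix.one_mul]
  rw [hC, Matrix.mul_assoc Pi, ← Matrix.mul_assoc (diagonal _) (diagonal _) C,
    diagonal_mul_diagonal_inv fun a => hd (r a), Matrix.one_mul, ← Matrix.mul_assoc, ← hW]

theorem mul_transpose_eq_of_eq_mul_diagonal_mul_transpose [DecidableEq m] {Pi : Matrix m k R}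
    {r : k → m} (hr : Pi.submatrix r id = 1) {d : m → R} (hd : ∀ i, d i ≠ 0)
    (P : Matrix k k R) {V : Matrix m k R} {e : k → R} (hV : Vᵀ * V = 1) (he : ∀ a, e a ≠ 0)
    (hL : diagonal (fun i => (d i)⁻¹) * (Pi * P * Piᵀ) * diagonal (fun i => (d i)⁻¹) =
      V * diagonal e * Vᵀ) :
    V * Vᵀ = diagonal (fun i => (d i)⁻¹) *
      (Pi * diagonal (fun a => d (r a)) * (V * Vᵀ).submatrix r id) := by
  refine eq_diagonal_inv_mul_mul_submatrix hr hd
    (C := P * Piᵀ * diagonal (fun i => (d i)⁻¹) * (V * diagonal (fun a => (e a)⁻¹) * Vᵀ)) ?_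
  rw [mul_transpose_eq_mul_of_eq_mul_diagonal_mul_transpose hV he hL]
  simp only [Matrix.mul_assoc]

end LinearAlgebra

section NonnegFactor

variable {m k : Type*} [Fintype m] [Fintype k] [DecidableEq m] [DecidableEq k]
  {Pi : Matrix m k ℝ} {a : m → ℝ} {b : k → ℝ}

theorem diagonal_mul_mul_diagonal_nonneg (hPi : ∀ i j, 0 ≤ Pi i j) (ha : ∀ i, 0 ≤ a i)
    (hb : ∀ j, 0 ≤ b j) (i : m) (j : k) : 0 ≤ (diagonal a * Pi * diagonal b) i j := by
  rw [mul_diagonal, diagonal_mul]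
  exact mul_nonneg (mul_nonneg (ha i) (hPi i j)) (hb j)

theorem diagonal_mul_mul_diagonal_row_ne_zero (hPi : ∀ i j, 0 ≤ Pi i j)
    (hPi_sum : ∀ i, ∑ j, Pi i j = 1) (ha : ∀ i, 0 < a i) (hb : ∀ j, 0 < b j) (i : m) :
    (diagonal a * Pi * diagonal b) i ≠ 0 := by
  obtain ⟨j, hj⟩ : ∃ j, Pi i j ≠ 0 := by
    by_contra! h
    simpa [h] using hPi_sum i
  refine Function.ne_iff.mpr ⟨j, ?_⟩
  rw [mul_diagonal, diagonal_mul]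
  exact (mul_pos (mul_pos (ha i) ((hPi i j).lt_of_ne' hj)) (hb j)).ne'

end NonnegFactor

section RowNormalization

variable {m k : ℕ}

/-- The paper's `V_{*}`; a zero row stays zero, since `x / 0 = 0`. -/
noncomputable def rowNormalize (M : Matrix (Fin m) (Fin k) ℝ) : Matrix (Fin m) (Fin k) ℝ :=
  of fun i j => M i j / rowNorm M i

theorem rowNorm_pos {M : Matrix (Fin m) (Fin k) ℝ} {i : Fin m} (h : M i ≠ 0) :
    0 < rowNorm M i := by
  obtain ⟨j, hj⟩ := Function.ne_iff.mp h
  exact Real.sqrt_pos.mpr <|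
    Finset.sum_pos' (fun j _ => sq_nonneg _) ⟨j, Finset.mem_univ j, sq_pos_of_ne_zero hj⟩

theorem rowNorm_diagonal_mul {c : Fin m → ℝ} (hc : ∀ i, 0 ≤ c i)
    (M : Matrix (Fin m) (Fin k) ℝ) (i : Fin m) :
    rowNorm (diagonal c * M) i = c i * rowNorm M i := by
  simp only [rowNorm, diagonal_mul, mul_pow, ← Finset.mul_sum]
  rw [Real.sqrt_mul (sq_nonneg _), Real.sqrt_sq (hc i)]

theorem rowNormalize_diagonal_mul {c : Fin m → ℝ} (hc : ∀ i, 0 < c i)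
    (M : Matrix (Fin m) (Fin k) ℝ) : rowNormalize (diagonal c * M) = rowNormalize M := by
  ext i j
  simp only [rowNormalize, of_apply, rowNorm_diagonal_mul (fun i => (hc i).le), diagonal_mul]
  exact mul_div_mul_left _ _ (hc i).ne'

theorem rowNormalize_eq_diagonal_mul (M : Matrix (Fin m) (Fin k) ℝ) :
    rowNormalize M = diagonal (fun i => (rowNorm M i)⁻¹) * M := by
  ext i j
  simp [rowNormalize, diagonal_mul, div_eq_inv_mul]

theorem rowNormalize_row_eq {M : Matrix (Fin m) (Fin k) ℝ} {i j : Fin m} (h : M i = M j) :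
    rowNormalize M i = rowNormalize M j := by
  funext l
  simp only [rowNormalize, rowNorm, of_apply, h]

theorem submatrix_eq_diagonal_rowNorm_mul_rowNormalize {l : ℕ} (M : Matrix (Fin m) (Fin k) ℝ)
    {r : Fin l → Fin m} (hr : ∀ a, M (r a) ≠ 0) :
    M.submatrix r id = diagonal (fun a => rowNorm M (r a)) * (rowNormalize M).submatrix r id := by
  ext a j
  simp [rowNormalize, diagonal_mul, mul_div_cancel₀ _ (rowNorm_pos (hr a)).ne']

theorem rowNormalize_mul_submatrix {l p : ℕ} (A : Matrix (Fin m) (Fin l) ℝ)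
    (W : Matrix (Fin p) (Fin k) ℝ) {r : Fin l → Fin p} (hr : ∀ a, W (r a) ≠ 0) :
    rowNormalize (A * W.submatrix r id) =
      diagonal (fun i => (rowNorm (A * W.submatrix r id) i)⁻¹) * A *
        diagonal (fun a => rowNorm W (r a)) * (rowNormalize W).submatrix r id := by
  conv_lhs =>
    rw [rowNormalize_eq_diagonal_mul]; rhs; rw [submatrix_eq_diagonal_rowNorm_mul_rowNormalize W hr]
  simp only [Matrix.mul_assoc]

end RowNormalization

theorem stmt_5_general
    {n K : ℕ}
    (Pi : Matrix (Fin n) (Fin K) ℝ)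
    (hPi_nonneg : ∀ i k, 0 ≤ Pi i k)
    (hPi_rowsum : ∀ i, ∑ k, Pi i k = 1)
    (Pt : Matrix (Fin K) (Fin K) ℝ)
    (ρ τ : ℝ)
    (Om : Matrix (Fin n) (Fin n) ℝ) (hOm : Om = Pi * (ρ • Pt) * Piᵀ)
    (deg : Fin n → ℝ)
    (hpos : ∀ i, 0 < deg i + τ)
    (Ltau : Matrix (Fin n) (Fin n) ℝ)
    (hLtau : Ltau = Matrix.diagonal (fun i => (Real.sqrt (deg i + τ))⁻¹) * Om *
      Matrix.diagonal (fun i => (Real.sqrt (deg i + τ))⁻¹))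
    (Idx : Fin K → Fin n) (hIdx : Pi.submatrix Idx id = 1)
    (V : Matrix (Fin n) (Fin K) ℝ) (e : Fin K → ℝ)
    (hVorth : Vᵀ * V = 1) (he : ∀ k, e k ≠ 0)
    (hVE : Ltau = V * Matrix.diagonal e * Vᵀ)
    (V2 : Matrix (Fin n) (Fin n) ℝ) (hV2 : V2 = V * Vᵀ)
    (hV2row : ∀ i, V2 i ≠ 0)
    (Vstar2 : Matrix (Fin n) (Fin n) ℝ)
    (hVstar2 : ∀ i j, Vstar2 i j = V2 i j / rowNorm V2 i)
    (M2 : Matrix (Fin n) (Fin n) ℝ)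
    (hM2 : M2 = Pi * Matrix.diagonal (fun k => Real.sqrt (deg (Idx k) + τ)) *
      V2.submatrix Idx id)
    (Y2 : Matrix (Fin n) (Fin K) ℝ)
    (hY2 : Y2 = Matrix.diagonal (fun i => (rowNorm M2 i)⁻¹) * Pi *
      Matrix.diagonal (fun k => Real.sqrt (deg (Idx k) + τ)) *
      Matrix.diagonal (fun k => rowNorm V2 (Idx k))) :
    (∀ i k, 0 ≤ Y2 i k) ∧
    (∀ i, Y2 i ≠ 0) ∧
    Vstar2 = Y2 * Vstar2.submatrix Idx id ∧
    (∀ i, 0 < (rowNorm M2 i)⁻¹) ∧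
    (∀ i j : Fin n, Pi i = Pi j → Vstar2 i = Vstar2 j) := by
  set d : Fin n → ℝ := fun i => Real.sqrt (deg i + τ)
  have hd : ∀ i, 0 < d i := fun i => Real.sqrt_pos.mpr (hpos i)
  have hV2_eq : V2 = diagonal (fun i => (d i)⁻¹) * M2 := by
    rw [hM2, hV2]
    exact mul_transpose_eq_of_eq_mul_diagonal_mul_transpose hIdx (fun i => (hd i).ne') (ρ • Pt)
      hVorth he (hOm ▸ hLtau ▸ hVE)
  have hVstar2_V2 : Vstar2 = rowNormalize V2 := ext hVstar2
  have hVstar2_M2 : Vstar2 = rowNormalize M2 := by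
    rw [hVstar2_V2, hV2_eq, rowNormalize_diagonal_mul fun i => inv_pos.mpr (hd i)]
  have hM2_norm : ∀ i, 0 < (rowNorm M2 i)⁻¹ := fun i => by
    have hV2_norm := rowNorm_pos (hV2row i)
    rw [hV2_eq, rowNorm_diagonal_mul fun i => (inv_pos.mpr (hd i)).le] at hV2_norm
    exact inv_pos.mpr (pos_of_mul_pos_right hV2_norm (inv_pos.mpr (hd i)).le)
  have hY2' : Y2 = diagonal (fun i => (rowNorm M2 i)⁻¹) * Pi *
      diagonal (fun k => d (Idx k) * rowNorm V2 (Idx k)) := by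
    rw [hY2, Matrix.mul_assoc _ (diagonal _), diagonal_mul_diagonal]
  have hY2_pos : ∀ k, 0 < d (Idx k) * rowNorm V2 (Idx k) :=
    fun k => mul_pos (hd _) (rowNorm_pos (hV2row _))
  refine ⟨?_, ?_, ?_, hM2_norm, fun i j hij => ?_⟩
  · rw [hY2']
    exact diagonal_mul_mul_diagonal_nonneg hPi_nonneg (fun i => (hM2_norm i).le)
      fun k => (hY2_pos k).le
  · rw [hY2']
    exact diagonal_mul_mul_diagonal_row_ne_zero hPi_nonneg hPi_rowsum hM2_norm hY2_pos
  · conv_rhs => rw [hY2, hVstar2_V2]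
    rw [hVstar2_M2, hM2, rowNormalize_mul_submatrix _ V2 fun a => hV2row _]
    simp only [Matrix.mul_assoc]
  · rw [hVstar2_M2]
    refine rowNormalize_row_eq ?_
    rw [hM2, Matrix.mul_assoc Pi, mul_apply_eq_vecMul, mul_apply_eq_vecMul, hij]

/-- Lemma 4.4: with `V₂ = V V'` and `V_{*,2}` its row-normalization, there is a
nonnegative `Y₂` with no zero row such that `V_{*,2} = Y₂ V_{*,2}(𝓘,:)`, explicitly
`Y₂ = N_{M₂} Π 𝒟_τ^{1/2}(𝓘,𝓘) N_{V₂}^{-1}(𝓘,𝓘)` with all diagonal entries of `N_{M₂}` positive;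
moreover equal membership rows give equal rows of `V_{*,2}`. -/
theorem stmt_5
    {n K : ℕ} (hn : 0 < n) (hK : 0 < K) (hKn : K ≤ n)
    (Pi : Matrix (Fin n) (Fin K) ℝ)
    (hPi_nonneg : ∀ i k, 0 ≤ Pi i k)
    (hPi_rowsum : ∀ i, ∑ k, Pi i k = 1)
    (hPi_rank : Pi.rank = K)
    (hpure : ∀ k : Fin K, ∃ i : Fin n, ∀ l, Pi i l = if l = k then 1 else 0)
    (Pt : Matrix (Fin K) (Fin K) ℝ)
    (hPt_symm : Pt.IsSymm)
    (hPt_nonneg : ∀ k l, 0 ≤ Pt k l)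
    (hPt_rank : Pt.rank = K)
    (hPt_le_one : ∀ k l, Pt k l ≤ 1)
    (hPt_max : ∃ k l, Pt k l = 1)
    (ρ τ : ℝ) (hρ0 : 0 < ρ) (hρ1 : ρ ≤ 1) (hτ : 0 ≤ τ)
    (Om : Matrix (Fin n) (Fin n) ℝ) (hOm : Om = Pi * (ρ • Pt) * Piᵀ)
    (deg : Fin n → ℝ) (hdeg : ∀ i, deg i = ∑ j, Om i j)
    (hpos : ∀ i, 0 < deg i + τ)
    (Ltau : Matrix (Fin n) (Fin n) ℝ)
    (hLtau : Ltau = Matrix.diagonal (fun i => (Real.sqrt (deg i + τ))⁻¹) * Om *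
      Matrix.diagonal (fun i => (Real.sqrt (deg i + τ))⁻¹))
    (Idx : Fin K → Fin n) (hIdx : Pi.submatrix Idx id = 1)
    (V : Matrix (Fin n) (Fin K) ℝ) (e : Fin K → ℝ)
    (hVorth : Vᵀ * V = 1) (he : ∀ k, e k ≠ 0)
    (hVE : Ltau = V * Matrix.diagonal e * Vᵀ)
    (V2 : Matrix (Fin n) (Fin n) ℝ) (hV2 : V2 = V * Vᵀ)
    (hV2row : ∀ i, V2 i ≠ 0)
    (Vstar2 : Matrix (Fin n) (Fin n) ℝ)
    (hVstar2 : ∀ i j, Vstar2 i j = V2 i j / rowNorm V2 i)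
    (M2 : Matrix (Fin n) (Fin n) ℝ)
    (hM2 : M2 = Pi * Matrix.diagonal (fun k => Real.sqrt (deg (Idx k) + τ)) *
      V2.submatrix Idx id)
    (Y2 : Matrix (Fin n) (Fin K) ℝ)
    (hY2 : Y2 = Matrix.diagonal (fun i => (rowNorm M2 i)⁻¹) * Pi *
      Matrix.diagonal (fun k => Real.sqrt (deg (Idx k) + τ)) *
      Matrix.diagonal (fun k => rowNorm V2 (Idx k))) :
    (∀ i k, 0 ≤ Y2 i k) ∧
    (∀ i, Y2 i ≠ 0) ∧
    Vstar2 = Y2 * Vstar2.submatrix Idx id ∧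
    (∀ i, 0 < (rowNorm M2 i)⁻¹) ∧
    (∀ i j : Fin n, Pi i = Pi j → Vstar2 i = Vstar2 j) :=
  stmt_5_general Pi hPi_nonneg hPi_rowsum Pt ρ τ Om hOm deg hpos Ltau hLtau Idx hIdx V e hVorth he
    hVE V2 hV2 hV2row Vstar2 hVstar2 M2 hM2 Y2 hY2
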